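/- Let N ≥ 2, let φ be twice continuously differentiable on a neighborhood of x₀ ∈ ℝ^N with ∇φ(x₀) ≠ 0. Then there exist δ > 0 and C > 0 such that for every x with |x − x₀| ≤ δ and every r ∈ (0, δ], |∫_{S^{N-1}} [1^+(φ(x + rω) − φ(x)) − 1^-(φ(x + rω) − φ(x))] dΣ(ω)| ≤ C r, where the integral is with respect to the surface measure on the unit sphere S^{N-1} ⊂ ℝ^N and 1^+ and 1^- are the indicators of [0,∞) and (−∞,0). -/

import Mathlib

open MeasureTheory Filter Metric Set
open scoped Topology RealInnerProductSpace ENNReal NNReal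

noncomputable section

abbrev Euc (n : ℕ) : Type := EuclideanSpace ℝ (Fin n)

/-- `sign`: `1` if positive, `-1` otherwise. -/
def thSign (s : ℝ) : ℝ := if 0 < s then 1 else -1

/-- `1^+ - 1^-`: `1` if `0 ≤ s`, `-1` otherwise. -/
def sgnGe (s : ℝ) : ℝ := if 0 ≤ s then 1 else -1

/-- `1_+ - 1_-`: `1` if `0 < s`, `-1` otherwise. -/
def sgnGt (s : ℝ) : ℝ := if 0 < s then 1 else -1

/-- indicator of `[0,∞)`. -/
def indPlus (s : ℝ) : ℝ := if 0 ≤ s then 1 else 0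

/-- The embedding `ℝ^{n-1} → ℝ^n`, `y' ↦ (0, y')`. -/
def pad (d : ℕ) (y' : Euc (d+1)) : Euc (d+2) :=
  (EuclideanSpace.equiv (Fin (d+2)) ℝ).symm
    (Fin.cons 0 (EuclideanSpace.equiv (Fin (d+1)) ℝ y'))

/-- the surface area of the unit sphere of `ℝ^m`. -/
def sphereArea (m : ℕ) : ℝ := 2 * Real.pi ^ ((m : ℝ)/2) / Real.Gamma ((m : ℝ)/2)

/-- the initial datum `1_{Ω₀} - 1_{(closure Ω₀)ᶜ}`. -/
def isSgnInitial (n : ℕ) (Ω₀ : Set (Euc n)) (v : Euc n → ℝ) : Prop :=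
  ∀ x, v x = Ω₀.indicator (fun _ => (1:ℝ)) x - ((closure Ω₀)ᶜ).indicator (fun _ => (1:ℝ)) x

/-- `U h k` is the threshold dynamics iterate at time step `k` with parameter `h`:
`u_h(⬝, (k+1)h) = sign (p(⬝, σ(h)) * u_h(⬝, kh))`. -/
def IsThresholdDynamics (n : ℕ) (p : Euc n → ℝ → ℝ) (σ : ℝ → ℝ) (Ω₀ : Set (Euc n))
    (U : ℝ → ℕ → Euc n → ℝ) : Prop :=
  ∀ h : ℝ, 0 < h → isSgnInitial n Ω₀ (U h 0) ∧
    ∀ (k : ℕ) (x : Euc n), U h (k+1) x = thSign (∫ y, p (x - y) (σ h) * U h k y)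

/-- `limsup* U (x,t)`, the upper half-relaxed limit as `h → 0⁺`, `y → x`, `kh → t`. -/
def limsupStar (n : ℕ) (U : ℝ → ℕ → Euc n → ℝ) (x : Euc n) (t : ℝ) : ℝ :=
  sInf {S : ℝ | ∃ ε : ℝ, 0 < ε ∧ S = sSup {v : ℝ | ∃ (h : ℝ) (k : ℕ) (y : Euc n),
    0 < h ∧ h < ε ∧ dist y x < ε ∧ |(k : ℝ) * h - t| < ε ∧ v = U h k y}}

/-- `liminf_* U (x,t)`, the lower half-relaxed limit as `h → 0⁺`, `y → x`, `kh → t`. -/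
def liminfStar (n : ℕ) (U : ℝ → ℕ → Euc n → ℝ) (x : Euc n) (t : ℝ) : ℝ :=
  sSup {S : ℝ | ∃ ε : ℝ, 0 < ε ∧ S = sInf {v : ℝ | ∃ (h : ℝ) (k : ℕ) (y : Euc n),
    0 < h ∧ h < ε ∧ dist y x < ε ∧ |(k : ℝ) * h - t| < ε ∧ v = U h k y}}

/-- a `C²` test function on `ℝ^n × (0,∞)`. -/
def IsC2Test (n : ℕ) (φ : Euc n → ℝ → ℝ) : Prop :=
  ContDiffOn ℝ 2 (fun q : Euc n × ℝ => φ q.1 q.2) (Set.univ ×ˢ Set.Ioi 0)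

/-- the spatial gradient `∇φ(x,t)`. -/
def spaceGrad (n : ℕ) (φ : Euc n → ℝ → ℝ) (x : Euc n) (t : ℝ) : Euc n :=
  gradient (fun y => φ y t) x

/-- the time derivative `φ_t(x,t)`. -/
def timeDeriv (n : ℕ) (φ : Euc n → ℝ → ℝ) (x : Euc n) (t : ℝ) : ℝ :=
  deriv (fun s => φ x s) t

/-- the spatial Hessian `D²φ(x,t)`. -/
def spaceHess (n : ℕ) (φ : Euc n → ℝ → ℝ) (x : Euc n) (t : ℝ) : Euc n →L[ℝ] Euc n :=
  fderiv ℝ (fun y => spaceGrad n φ y t) x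

/-- local boundedness of a space-time function. -/
def LocBounded (n : ℕ) (w : Euc n → ℝ → ℝ) : Prop :=
  ∀ K : Set (Euc n × ℝ), IsCompact K → ∃ M, ∀ q ∈ K, |w q.1 q.2| ≤ M

/-- `C tr((I - p̂ ⊗ p̂) D²φ)(x,t)` with `p̂ = ∇φ/|∇φ|`. -/
def mcfRHS (n : ℕ) (C : ℝ) (φ : Euc n → ℝ → ℝ) (x : Euc n) (t : ℝ) : ℝ :=
  C * (LinearMap.trace ℝ (Euc n) (spaceHess n φ x t : Euc n →ₗ[ℝ] Euc n) -
    @inner ℝ _ _ (spaceHess n φ x t (‖spaceGrad n φ x t‖⁻¹ • spaceGrad n φ x t))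
      (‖spaceGrad n φ x t‖⁻¹ • spaceGrad n φ x t))

/-- viscosity subsolution of `w_t = C tr((I - D̂w ⊗ D̂w) D²w)`. -/
def IsMCFSubsolution (n : ℕ) (C : ℝ) (w : Euc n → ℝ → ℝ) : Prop :=
  UpperSemicontinuousOn (fun q : Euc n × ℝ => w q.1 q.2) (Set.univ ×ˢ Set.Ioi 0) ∧
  LocBounded n w ∧
  ∀ φ : Euc n → ℝ → ℝ, IsC2Test n φ → ∀ (x : Euc n) (t : ℝ), 0 < t →
    (∀ y s, 0 < s → w y s - φ y s ≤ w x t - φ x t) →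
    (spaceGrad n φ x t ≠ 0 → timeDeriv n φ x t ≤ mcfRHS n C φ x t) ∧
    (spaceGrad n φ x t = 0 → spaceHess n φ x t = 0 → timeDeriv n φ x t ≤ 0)

/-- viscosity supersolution of `w_t = C tr((I - D̂w ⊗ D̂w) D²w)`. -/
def IsMCFSupersolution (n : ℕ) (C : ℝ) (w : Euc n → ℝ → ℝ) : Prop :=
  LowerSemicontinuousOn (fun q : Euc n × ℝ => w q.1 q.2) (Set.univ ×ˢ Set.Ioi 0) ∧
  LocBounded n w ∧
  ∀ φ : Euc n → ℝ → ℝ, IsC2Test n φ → ∀ (x : Euc n) (t : ℝ), 0 < t →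
    (∀ y s, 0 < s → w x t - φ x t ≤ w y s - φ y s) →
    (spaceGrad n φ x t ≠ 0 → mcfRHS n C φ x t ≤ timeDeriv n φ x t) ∧
    (spaceGrad n φ x t = 0 → spaceHess n φ x t = 0 → 0 ≤ timeDeriv n φ x t)

/-- the nonlocal operator `Ī_A[v]` (at a fixed time). -/
def Ibar (n : ℕ) (α : ℝ) (A : Set (Euc n)) (v : Euc n → ℝ) (x : Euc n) : ℝ :=
  ∫ y in A, sgnGe (v (x + y) - v x) * ‖y‖ ^ (-((n : ℝ) + α))

/-- the nonlocal operator `I̲_A[v]` (at a fixed time). -/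
def Iunder (n : ℕ) (α : ℝ) (A : Set (Euc n)) (v : Euc n → ℝ) (x : Euc n) : ℝ :=
  ∫ y in A, sgnGt (v (x + y) - v x) * ‖y‖ ^ (-((n : ℝ) + α))

/-- viscosity subsolution of the nonlocal equation `w_t = C |Dw| Ī[w]`. -/
def IsNLSubsolution (n : ℕ) (α C : ℝ) (w : Euc n → ℝ → ℝ) : Prop :=
  UpperSemicontinuousOn (fun q : Euc n × ℝ => w q.1 q.2) (Set.univ ×ˢ Set.Ioi 0) ∧
  LocBounded n w ∧
  ∀ φ : Euc n → ℝ → ℝ, IsC2Test n φ → ∀ (x : Euc n) (t : ℝ), 0 < t →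
    (∀ y s, 0 < s → w y s - φ y s ≤ w x t - φ x t) →
    ∀ δ : ℝ, 0 < δ →
      timeDeriv n φ x t ≤ C * ‖spaceGrad n φ x t‖ *
        (Ibar n α (Metric.ball 0 δ) (fun y => φ y t) x +
          Ibar n α (Metric.ball 0 δ)ᶜ (fun y => w y t) x)

/-- viscosity supersolution of the nonlocal equation `w_t = C |Dw| Ī[w]`. -/
def IsNLSupersolution (n : ℕ) (α C : ℝ) (w : Euc n → ℝ → ℝ) : Prop :=
  LowerSemicontinuousOn (fun q : Euc n × ℝ => w q.1 q.2) (Set.univ ×ˢ Set.Ioi 0) ∧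
  LocBounded n w ∧
  ∀ φ : Euc n → ℝ → ℝ, IsC2Test n φ → ∀ (x : Euc n) (t : ℝ), 0 < t →
    (∀ y s, 0 < s → w x t - φ x t ≤ w y s - φ y s) →
    ∀ δ : ℝ, 0 < δ →
      C * ‖spaceGrad n φ x t‖ *
        (Iunder n α (Metric.ball 0 δ) (fun y => φ y t) x +
          Ibar n α (Metric.ball 0 δ)ᶜ (fun y => w y t) x) ≤ timeDeriv n φ x t

/-- A kernel `P` of fractional order `α`: positive, bounded, continuous, radially symmetric,
of total mass one, with decay `P(x) ≤ C₀(1+|x|^{N+α})⁻¹` and such that, with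
`p(x,t) = t^{-N/α}P(t^{-1/α}x)`, `t⁻¹ p(⬝,t) → c_α |⬝|^{-(N+α)}` as `t → 0⁺`, locally
uniformly away from the origin and in `L¹` outside every ball around the origin. -/
structure FracKernel (n : ℕ) (α : ℝ) where
  P : Euc n → ℝ
  cα : ℝ
  cα_pos : 0 < cα
  P_pos : ∀ x, 0 < P x
  P_bdd : ∃ M, ∀ x, P x ≤ M
  P_cont : Continuous P
  P_radial : ∀ x y : Euc n, ‖x‖ = ‖y‖ → P x = P y
  P_int : ∫ x, P x = 1
  P_decay : ∃ C₀ : ℝ, 0 < C₀ ∧ ∀ x, P x ≤ C₀ * (1 + ‖x‖ ^ ((n : ℝ) + α))⁻¹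
  loc_unif : ∀ K : Set (Euc n), IsCompact K → (0 : Euc n) ∉ K →
    TendstoUniformlyOn
      (fun (t : ℝ) (x : Euc n) => t⁻¹ * (t ^ (-(n : ℝ)/α) * P ((t ^ (-α⁻¹ : ℝ)) • x)))
      (fun x => cα * ‖x‖ ^ (-((n : ℝ) + α))) (nhdsWithin 0 (Set.Ioi 0)) K
  L1_conv : ∀ r : ℝ, 0 < r →
    Tendsto (fun t : ℝ => ∫ x in {x : Euc n | r ≤ ‖x‖},
        |t⁻¹ * (t ^ (-(n : ℝ)/α) * P ((t ^ (-α⁻¹ : ℝ)) • x)) - cα * ‖x‖ ^ (-((n : ℝ) + α))|)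
      (nhdsWithin 0 (Set.Ioi 0)) (nhds 0)

/-- the scaled kernel `p(x,t) = t^{-N/α} P(t^{-1/α} x)`. -/
def FracKernel.p {n : ℕ} {α : ℝ} (K : FracKernel n α) (x : Euc n) (t : ℝ) : ℝ :=
  t ^ (-(n : ℝ)/α) * K.P ((t ^ (-α⁻¹ : ℝ)) • x)

/-- the constant `C_α = c_α (2∫_{ℝ^{N-1}} P(0,y') dy')⁻¹`. -/
def fracC (d : ℕ) (α : ℝ) (K : FracKernel (d+2) α) : ℝ :=
  K.cα * (2 * ∫ y' : Euc (d+1), K.P (pad d y'))⁻¹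

/-- the constant `C_α = (∫_{ℝ^{N-1}} (y'_1)² P(0,y') dy') (2∫_{ℝ^{N-1}} P(0,y') dy')⁻¹`. -/
def mcfC (d : ℕ) (α : ℝ) (K : FracKernel (d+2) α) : ℝ :=
  (∫ y' : Euc (d+1), (y' 0)^2 * K.P (pad d y')) *
    (2 * ∫ y' : Euc (d+1), K.P (pad d y'))⁻¹

/-- the Poisson kernel `p(x,t) = c_N t (t² + |x|²)^{-(N+1)/2}`. -/
def poissonp (n : ℕ) (x : Euc n) (t : ℝ) : ℝ :=
  (Real.Gamma (((n : ℝ) + 1)/2) * Real.pi ^ (-(((n : ℝ) + 1)/2))) * t *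
    (t^2 + ‖x‖^2) ^ (-(((n : ℝ) + 1)/2))

/-- the constant `C₁ = ω_{N-1} (2 ∫_{ℝ^{N-1}} (1+|y'|²)^{-(N+1)/2} dy')⁻¹`. -/
def poissonC1 (d : ℕ) : ℝ :=
  sphereArea (d+1) *
    (2 * ∫ y' : Euc (d+1), ((1 : ℝ) + ‖y'‖^2) ^ (-(((d : ℝ) + 3)/2)))⁻¹

/-- the no-interior condition for the evolving front. -/
def NoInterior (n : ℕ) (u : Euc n → ℝ → ℝ) : Prop :=
  (⋃ t ∈ Set.Ioi (0:ℝ), (fun x => (x, t)) '' {x : Euc n | u x t = 0}) =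
      frontier {q : Euc n × ℝ | 0 < q.2 ∧ 0 < u q.1 q.2} ∩ {q : Euc n × ℝ | 0 < q.2} ∧
  (⋃ t ∈ Set.Ioi (0:ℝ), (fun x => (x, t)) '' {x : Euc n | u x t = 0}) =
      frontier {q : Euc n × ℝ | 0 < q.2 ∧ u q.1 q.2 < 0} ∩ {q : Euc n × ℝ | 0 < q.2}

/-- the upper semicontinuous envelope in the space variable. -/
def uscEnvSpace (n : ℕ) (v : Euc n → ℝ) (x : Euc n) : ℝ :=
  sInf {S : ℝ | ∃ ε : ℝ, 0 < ε ∧ S = sSup {w : ℝ | ∃ y : Euc n, dist y x < ε ∧ w = v y}}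

/-- the upper semicontinuous envelope on `ℝ^n × [0,∞)`. -/
def uscEnvST (n : ℕ) (w : Euc n → ℝ → ℝ) (x : Euc n) (t : ℝ) : ℝ :=
  sInf {S : ℝ | ∃ ε : ℝ, 0 < ε ∧ S = sSup {v : ℝ | ∃ (y : Euc n) (s : ℝ),
    0 ≤ s ∧ dist y x < ε ∧ |s - t| < ε ∧ v = w y s}}

/-- the lower semicontinuous envelope on `ℝ^n × [0,∞)`. -/
def lscEnvST (n : ℕ) (w : Euc n → ℝ → ℝ) (x : Euc n) (t : ℝ) : ℝ :=
  sSup {S : ℝ | ∃ ε : ℝ, 0 < ε ∧ S = sInf {v : ℝ | ∃ (y : Euc n) (s : ℝ),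
    0 ≤ s ∧ dist y x < ε ∧ |s - t| < ε ∧ v = w y s}}

/-!
Write `u = ∇φ(x)`. Since `Dφ` is Lipschitz near `x₀`, `φ(x + rω) - φ(x)` differs from
`r⟪u, ω⟫` by at most `K r²`, so the two have the same sign off the slab `|⟪u, ω⟫| ≤ K r` of the
unit sphere. In an orthonormal frame containing `u / |u|`, the cone over that slab lies in a box
with one side `2 K r / |u|` and all others `2`, so the slab has surface measure `O(r / |u|)`.
On the other hand the antipodal map preserves surface measure and flips the sign of `⟪u, ω⟫`
off the (null) equator, so `∫ sgn ⟪u, ω⟫ dΣ = 0`. Hence the integral is at most twice the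
measure of the slab.
-/

section sgnGe

theorem abs_sgnGe (s : ℝ) : |sgnGe s| = 1 := by
  unfold sgnGe; split_ifs <;> norm_num

theorem sgnGe_add_sgnGe_neg {s : ℝ} (hs : s ≠ 0) : sgnGe s + sgnGe (-s) = 0 := by
  unfold sgnGe
  rcases hs.lt_or_gt with hs | hs
  · rw [if_neg hs.not_ge, if_pos (neg_nonneg.2 hs.le)]; norm_num
  · rw [if_pos hs.le, if_neg (neg_neg_iff_pos.2 hs).not_ge]; norm_num

theorem sgnGe_eq_of_abs_sub_lt {a b : ℝ} (h : |a - b| < |b|) : sgnGe a = sgnGe b := by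
  unfold sgnGe
  split_ifs with ha hb hb <;> first
    | rfl
    | (cases abs_cases (a - b) <;> cases abs_cases b <;> linarith)

theorem measurable_sgnGe : Measurable sgnGe :=
  Measurable.ite measurableSet_Ici measurable_const measurable_const

variable {α : Type*} [MeasurableSpace α] {μ : Measure α} [IsFiniteMeasure μ]

theorem integrable_sgnGe_comp {f : α → ℝ} (hf : AEMeasurable f μ) :
    Integrable (fun a => sgnGe (f a)) μ :=
  .of_bound (measurable_sgnGe.comp_aemeasurable hf).aestronglyMeasurable 1
    (ae_of_all _ fun a => (abs_sgnGe (f a)).le)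

theorem abs_integral_sgnGe_sub_integral_sgnGe_le {f g : α → ℝ} (hf : AEMeasurable f μ)
    (hg : AEMeasurable g μ) {s : Set α} (hs : MeasurableSet s)
    (hfg : ∀ a ∉ s, sgnGe (f a) = sgnGe (g a)) :
    |∫ a, sgnGe (f a) ∂μ - ∫ a, sgnGe (g a) ∂μ| ≤ 2 * μ.real s := by
  have hpt : ∀ a, ‖sgnGe (f a) - sgnGe (g a)‖ ≤ s.indicator (fun _ => (2 : ℝ)) a := by
    intro a
    by_cases ha : a ∈ s
    · rw [indicator_of_mem ha, Real.norm_eq_abs]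
      calc |sgnGe (f a) - sgnGe (g a)| ≤ |sgnGe (f a)| + |sgnGe (g a)| := abs_sub _ _
        _ = 2 := by rw [abs_sgnGe, abs_sgnGe]; norm_num
    · rw [indicator_of_notMem ha, hfg a ha, sub_self, norm_zero]
  rw [← integral_sub (integrable_sgnGe_comp hf) (integrable_sgnGe_comp hg)]
  calc |∫ a, (sgnGe (f a) - sgnGe (g a)) ∂μ|
      ≤ ∫ a, s.indicator (fun _ => (2 : ℝ)) a ∂μ :=
        norm_integral_le_of_norm_le ((integrable_const 2).indicator hs) (ae_of_all _ hpt)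
    _ = 2 * μ.real s := by rw [integral_indicator_const _ hs, smul_eq_mul, mul_comm]

end sgnGe

section Calculus

variable {E F : Type*} [NormedAddCommGroup E] [NormedSpace ℝ E] [NormedAddCommGroup F]
  [NormedSpace ℝ F]

theorem ContDiffAt.exists_lipschitzOnWith_fderiv {f : E → F} {x₀ : E}
    (hf : ContDiffAt ℝ 2 f x₀) :
    ∃ K : ℝ≥0, ∃ t ∈ 𝓝 x₀, (∀ y ∈ t, DifferentiableAt ℝ f y) ∧
      LipschitzOnWith K (fderiv ℝ f) t := by
  obtain ⟨K, t, ht, hlip⟩ := (hf.fderiv_right (m := 1) le_rfl).exists_lipschitzOnWith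
  refine ⟨K, t ∩ {y | DifferentiableAt ℝ f y}, inter_mem ht ?_, fun y hy => hy.2,
    hlip.mono inter_subset_left⟩
  exact (hf.eventually (by simp)).mono fun y hy => hy.differentiableAt (by norm_num)

theorem Convex.norm_sub_sub_fderiv_le_of_lipschitzOnWith {f : E → F} {s : Set E}
    (hs : Convex ℝ s) (hf : ∀ y ∈ s, DifferentiableAt ℝ f y) {K : ℝ≥0}
    (hlip : LipschitzOnWith K (fderiv ℝ f) s) {x y : E} (hx : x ∈ s) (hy : y ∈ s) :
    ‖f y - f x - fderiv ℝ f x (y - x)‖ ≤ K * ‖y - x‖ ^ 2 := by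
  have hseg : segment ℝ x y ⊆ s := hs.segment_subset hx hy
  have hbound : ∀ z ∈ segment ℝ x y, ‖fderiv ℝ f z - fderiv ℝ f x‖ ≤ K * ‖y - x‖ :=
    fun z hz => (hlip.norm_sub_le (hseg hz) hx).trans <| by
      gcongr; exact norm_sub_le_of_mem_segment hz
  simpa only [pow_two, mul_assoc] using (convex_segment x y).norm_image_sub_le_of_norm_fderiv_le'
    (fun z hz => hf z (hseg hz)) hbound (left_mem_segment ℝ x y) (right_mem_segment ℝ x y)

end Calculus

section NormedSpace

open scoped Pointwise

variable {F : Type*} [NormedAddCommGroup F] [NormedSpace ℝ F] [MeasurableSpace F] [BorelSpace F]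

namespace MeasureTheory.Measure

instance IsAddHaarMeasure.isNegInvariant [FiniteDimensional ℝ F] (μ : Measure F)
    [μ.IsAddHaarMeasure] :
    μ.IsNegInvariant := by
  refine ⟨Measure.ext fun s _ => ?_⟩
  rw [Measure.neg_apply, ← one_smul ℝ s, ← neg_smul_set, Measure.addHaar_smul]
  simp

theorem toSphere_le_of_forall_smul_mem (μ : Measure F) {s : Set (sphere (0 : F) 1)}
    (hs : MeasurableSet s) {T : Set F} (hT : ∀ ω ∈ s, ∀ t ∈ Ioo (0 : ℝ) 1, t • (ω : F) ∈ T) :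
    μ.toSphere s ≤ Module.finrank ℝ F * μ T := by
  rw [μ.toSphere_apply' hs]
  gcongr
  rintro _ ⟨t, ht, _, ⟨ω, hω, rfl⟩, rfl⟩
  exact hT ω hω t ht

theorem measurePreserving_neg_toSphere (μ : Measure F) [μ.IsNegInvariant] :
    MeasurePreserving (fun ω : sphere (0 : F) 1 => -ω) μ.toSphere μ.toSphere := by
  refine ⟨continuous_neg.measurable, Measure.ext fun s hs => ?_⟩
  have hval : ((↑) : sphere (0 : F) 1 → F) '' ((fun ω => -ω) ⁻¹' s) = -((↑) '' s) := by
    ext y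
    constructor
    · rintro ⟨ω, hω, rfl⟩
      exact ⟨-ω, hω, rfl⟩
    · rintro ⟨ω, hω, hωy⟩
      exact ⟨-ω, by simpa using hω, by simp [hωy]⟩
  rw [Measure.map_apply continuous_neg.measurable hs, μ.toSphere_apply' hs,
    μ.toSphere_apply' (hs.preimage continuous_neg.measurable), hval, Set.smul_neg,
    Measure.measure_neg]

end MeasureTheory.Measure

end NormedSpace

section InnerProductSpace

open Module

variable {E : Type*} [NormedAddCommGroup E] [InnerProductSpace ℝ E] [FiniteDimensional ℝ E]
  [MeasurableSpace E] [BorelSpace E]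

theorem volume_setOf_norm_le_one_abs_inner_le {u : E} (hu : u ≠ 0) {ε : ℝ} (hε : 0 ≤ ε) :
    volume {y : E | ‖y‖ ≤ 1 ∧ |⟪u, y⟫| ≤ ε} ≤
      ENNReal.ofReal (2 ^ finrank ℝ E * (ε / ‖u‖)) := by
  set ν : E := ‖u‖⁻¹ • u
  have hν : Orthonormal ℝ ((↑) : ({ν} : Set E) → E) := by
    simp [ν, norm_smul, norm_ne_zero_iff.2 hu]
  obtain ⟨w, b, hνw, hb⟩ := hν.exists_orthonormalBasis_extension
  classical
  let i₀ : w := ⟨ν, hνw (mem_singleton ν)⟩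
  let c : w → ℝ := Function.update 1 i₀ (ε / ‖u‖)
  have hsub : {y : E | ‖y‖ ≤ 1 ∧ |⟪u, y⟫| ≤ ε} ⊆ b.repr ⁻¹' (WithLp.ofLp ⁻¹' Icc (-c) c) := by
    rintro y ⟨hy, hyu⟩
    simp only [mem_preimage, mem_Icc, Pi.le_def, Pi.neg_apply, ← forall_and]
    refine fun i => abs_le.1 ?_
    rw [b.repr_apply_apply, hb]
    rcases eq_or_ne i i₀ with rfl | hi
    · simp only [c, Function.update_self]
      rw [real_inner_smul_left, abs_mul, abs_inv, abs_norm, inv_mul_eq_div]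
      gcongr
    · simp only [c, Function.update_of_ne hi, Pi.one_apply]
      calc |⟪(i : E), y⟫| ≤ ‖(i : E)‖ * ‖y‖ := abs_real_inner_le_norm _ _
        _ ≤ 1 * 1 := by
          gcongr
          rw [← hb]; exact (b.orthonormal.1 i).le
        _ = 1 := one_mul 1
  calc volume {y : E | ‖y‖ ≤ 1 ∧ |⟪u, y⟫| ≤ ε}
      ≤ volume (b.repr ⁻¹' (WithLp.ofLp ⁻¹' Icc (-c) c)) := measure_mono hsub
    _ = volume (Icc (-c) c) := by
      rw [(b.measurePreserving_repr).measure_preimage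
          (measurableSet_Icc.preimage (PiLp.volume_preserving_ofLp w).measurable).nullMeasurableSet,
        (PiLp.volume_preserving_ofLp w).measure_preimage measurableSet_Icc.nullMeasurableSet]
    _ = ENNReal.ofReal (2 ^ finrank ℝ E * (ε / ‖u‖)) := by
      have hc : ∀ i, 0 ≤ c i := fun i => by
        rcases eq_or_ne i i₀ with rfl | hi
        · simp only [c, Function.update_self]; positivity
        · simp [c, Function.update_of_ne hi]
      rw [Real.volume_Icc_pi, ← ENNReal.ofReal_prod_of_nonneg fun i _ => by
        simpa only [Pi.neg_apply, sub_neg_eq_add] using add_nonneg (hc i) (hc i)]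
      congr 1
      simp only [Pi.neg_apply, sub_neg_eq_add, ← two_mul, Finset.prod_mul_distrib,
        Finset.prod_const, c,
        Finset.prod_update_of_mem (Finset.mem_univ i₀), Pi.one_apply, one_pow,
        mul_one, Finset.card_univ, finrank_eq_card_basis b.toBasis]

namespace MeasureTheory.Measure

theorem toSphere_setOf_inner_eq_zero (μ : Measure E) [μ.IsAddHaarMeasure] {u : E}
    (hu : u ≠ 0) : μ.toSphere {ω | ⟪u, (ω : E)⟫ = 0} = 0 := by
  have hmeas : MeasurableSet {ω : sphere (0 : E) 1 | ⟪u, (ω : E)⟫ = 0} :=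
    measurableSet_eq_fun (by fun_prop) measurable_const
  have hne : (ℝ ∙ u)ᗮ ≠ ⊤ := fun h => hu <| inner_self_eq_zero.1 <|
    Submodule.mem_orthogonal_singleton_iff_inner_right.1 (h ▸ Submodule.mem_top)
  refine le_antisymm ?_ zero_le
  calc μ.toSphere {ω | ⟪u, (ω : E)⟫ = 0} ≤ finrank ℝ E * μ (ℝ ∙ u)ᗮ :=
        μ.toSphere_le_of_forall_smul_mem hmeas fun ω hω t _ =>
          Submodule.mem_orthogonal_singleton_iff_inner_right.2 <| by
            rw [real_inner_smul_right, hω.out, mul_zero]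
    _ = 0 := by rw [Measure.addHaar_submodule μ _ hne, mul_zero]

theorem integral_sgnGe_inner_toSphere (μ : Measure E) [μ.IsAddHaarMeasure] {u : E}
    (hu : u ≠ 0) : ∫ ω, sgnGe ⟪u, (ω : E)⟫ ∂μ.toSphere = 0 := by
  set G : sphere (0 : E) 1 → ℝ := fun ω => sgnGe ⟪u, (ω : E)⟫
  have hneg : ∫ ω, G (-ω) ∂μ.toSphere = ∫ ω, G ω ∂μ.toSphere :=
    (μ.measurePreserving_neg_toSphere).integral_comp (Homeomorph.neg _).measurableEmbedding G
  have hcancel : ∀ᵐ ω ∂μ.toSphere, G ω + G (-ω) = 0 := by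
    filter_upwards [measure_eq_zero_iff_ae_notMem.1 (μ.toSphere_setOf_inner_eq_zero hu)]
      with ω hω
    simp only [G, coe_neg_sphere, inner_neg_right]
    exact sgnGe_add_sgnGe_neg hω
  have hint : Integrable G μ.toSphere := integrable_sgnGe_comp (by fun_prop)
  have hint_neg : Integrable (fun ω => G (-ω)) μ.toSphere :=
    (μ.measurePreserving_neg_toSphere).integrable_comp_of_integrable hint
  have hsum := integral_eq_zero_of_ae hcancel
  rw [integral_add hint hint_neg, hneg] at hsum
  linarith

end MeasureTheory.Measure

theorem toSphere_real_setOf_abs_inner_le {u : E} (hu : u ≠ 0) {ε : ℝ} (hε : 0 ≤ ε) :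
    (volume : Measure E).toSphere.real {ω | |⟪u, (ω : E)⟫| ≤ ε} ≤
      finrank ℝ E * 2 ^ finrank ℝ E * (ε / ‖u‖) := by
  have hmeas : MeasurableSet {ω : sphere (0 : E) 1 | |⟪u, (ω : E)⟫| ≤ ε} :=
    measurableSet_le (by fun_prop) measurable_const
  refine ENNReal.toReal_le_of_le_ofReal (by positivity) ?_
  calc (volume : Measure E).toSphere {ω | |⟪u, (ω : E)⟫| ≤ ε}
      ≤ finrank ℝ E * volume {y : E | ‖y‖ ≤ 1 ∧ |⟪u, y⟫| ≤ ε} := by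
        refine Measure.toSphere_le_of_forall_smul_mem _ hmeas fun ω hω t ht => ⟨?_, ?_⟩
        · rw [norm_smul, norm_eq_of_mem_sphere ω, mul_one, Real.norm_of_nonneg ht.1.le]
          exact ht.2.le
        · rw [real_inner_smul_right, abs_mul, abs_of_pos ht.1]
          exact (mul_le_of_le_one_left (abs_nonneg _) ht.2.le).trans hω.out
    _ ≤ finrank ℝ E * ENNReal.ofReal (2 ^ finrank ℝ E * (ε / ‖u‖)) := by
        gcongr; exact volume_setOf_norm_le_one_abs_inner_le hu hε
    _ = ENNReal.ofReal (finrank ℝ E * 2 ^ finrank ℝ E * (ε / ‖u‖)) := by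
        rw [mul_assoc, ENNReal.ofReal_mul (Nat.cast_nonneg _), ENNReal.ofReal_natCast]

theorem abs_integral_sgnGe_toSphere_le {g : sphere (0 : E) 1 → ℝ}
    (hg : AEMeasurable g (volume : Measure E).toSphere) {u : E} (hu : u ≠ 0) {η : ℝ}
    (hη : 0 ≤ η) (h : ∀ ω, |g ω - ⟪u, (ω : E)⟫| ≤ η) :
    |∫ ω, sgnGe (g ω) ∂(volume : Measure E).toSphere| ≤
      2 * (finrank ℝ E * 2 ^ finrank ℝ E * (η / ‖u‖)) := by
  have hcmp := abs_integral_sgnGe_sub_integral_sgnGe_le hg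
    (g := fun ω : sphere (0 : E) 1 => ⟪u, (ω : E)⟫) (by fun_prop)
    (s := {ω | |⟪u, (ω : E)⟫| ≤ η}) (measurableSet_le (by fun_prop) measurable_const)
    fun ω hω => sgnGe_eq_of_abs_sub_lt ((h ω).trans_lt (not_le.1 hω))
  rw [Measure.integral_sgnGe_inner_toSphere _ hu, sub_zero] at hcmp
  exact hcmp.trans (by gcongr; exact toSphere_real_setOf_abs_inner_le hu hη)

theorem abs_integral_sgnGe_sub_toSphere_le_of_lipschitzOnWith {φ : E → ℝ} {s : Set E}
    (hs : Convex ℝ s) (hφ : ∀ y ∈ s, DifferentiableAt ℝ φ y) {K : ℝ≥0}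
    (hlip : LipschitzOnWith K (fderiv ℝ φ) s) {x : E} {r : ℝ} (hr : 0 < r)
    (hxs : closedBall x r ⊆ s) (hgrad : gradient φ x ≠ 0) :
    |∫ ω, sgnGe (φ (x + r • (ω : E)) - φ x) ∂(volume : Measure E).toSphere| ≤
      2 * (finrank ℝ E * 2 ^ finrank ℝ E * (K * r / ‖gradient φ x‖)) := by
  have hx : x ∈ s := hxs (mem_closedBall_self hr.le)
  have hmem : ∀ ω : sphere (0 : E) 1, x + r • (ω : E) ∈ s := fun ω => hxs <| by
    rw [mem_closedBall, dist_self_add_left, norm_smul, norm_eq_of_mem_sphere ω, mul_one,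
      Real.norm_of_nonneg hr.le]
  have htaylor : ∀ ω : sphere (0 : E) 1,
      |(φ (x + r • (ω : E)) - φ x) - ⟪r • gradient φ x, (ω : E)⟫| ≤ K * r ^ 2 := by
    intro ω
    have := hs.norm_sub_sub_fderiv_le_of_lipschitzOnWith hφ hlip hx (hmem ω)
    rwa [add_sub_cancel_left, norm_smul, norm_eq_of_mem_sphere ω, mul_one,
      Real.norm_of_nonneg hr.le, map_smul, smul_eq_mul, ← inner_gradient_left,
      ← real_inner_smul_left, Real.norm_eq_abs] at this
  have hcont : Continuous fun ω : sphere (0 : E) 1 => φ (x + r • (ω : E)) - φ x :=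
    ((continuousOn_of_forall_continuousAt fun y hy => (hφ y hy).continuousAt).comp_continuous
      (by fun_prop) hmem).sub continuous_const
  calc _ ≤ 2 * (finrank ℝ E * 2 ^ finrank ℝ E * (K * r ^ 2 / ‖r • gradient φ x‖)) :=
        abs_integral_sgnGe_toSphere_le hcont.aemeasurable (smul_ne_zero hr.ne' hgrad)
          (by positivity) htaylor
    _ = 2 * (finrank ℝ E * 2 ^ finrank ℝ E * (K * r / ‖gradient φ x‖)) := by
        rw [norm_smul, Real.norm_of_nonneg hr.le]
        field_simp [norm_ne_zero_iff.2 hgrad]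

end InnerProductSpace


/-- The spherical balance estimate: near a point where `∇φ ≠ 0`, the signed spherical
average of `1^+ - 1^-` of `φ(x + rω) - φ(x)` is `O(r)`. -/
theorem spherical_balance_estimate
    (d : ℕ) (x₀ : Euc (d+2)) (φ : Euc (d+2) → ℝ)
    (V : Set (Euc (d+2))) (hV : V ∈ nhds x₀) (hφ : ContDiffOn ℝ 2 φ V)
    (hgrad : gradient φ x₀ ≠ 0) :
    ∃ δ : ℝ, 0 < δ ∧ ∃ C : ℝ, 0 < C ∧
      ∀ x : Euc (d+2), dist x x₀ ≤ δ → ∀ r : ℝ, 0 < r → r ≤ δ →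
        |∫ ω : Metric.sphere (0 : Euc (d+2)) 1,
            sgnGe (φ (x + r • (ω : Euc (d+2))) - φ x)
          ∂((volume : Measure (Euc (d+2))).toSphere)| ≤ C * r := by
  have hφ₀ : ContDiffAt ℝ 2 φ x₀ := hφ.contDiffAt hV
  obtain ⟨K, t, ht, hdiff, hlip⟩ := hφ₀.exists_lipschitzOnWith_fderiv
  set m := ‖gradient φ x₀‖ / 2
  have hm : 0 < m := half_pos (norm_pos_iff.2 hgrad)
  have hgrad_cont : ContinuousAt (gradient φ) x₀ :=
    (InnerProductSpace.toDual ℝ _).symm.continuous.continuousAt.comp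
      (hφ₀.fderiv_right (m := 1) le_rfl).continuousAt
  obtain ⟨ε, hε, hball⟩ := nhds_basis_closedBall.mem_iff.1
    (inter_mem ht (hgrad_cont.norm.eventually (lt_mem_nhds (half_lt_self (norm_pos_iff.2 hgrad)))))
  set n := Module.finrank ℝ (Euc (d+2))
  have hn : 0 < n := Module.finrank_pos
  refine ⟨ε / 2, half_pos hε, 2 * (n * 2 ^ n * ((K + 1) / m)), by positivity,
    fun x hx r hr hrε => ?_⟩
  have hsub : closedBall x r ⊆ closedBall x₀ ε := closedBall_subset_closedBall' (by linarith)
  have hgx : m < ‖gradient φ x‖ := (hball (hsub (mem_closedBall_self hr.le))).2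
  calc _ ≤ 2 * (n * 2 ^ n * (K * r / ‖gradient φ x‖)) :=
        abs_integral_sgnGe_sub_toSphere_le_of_lipschitzOnWith (convex_closedBall x₀ ε)
          (fun y hy => hdiff y (hball hy).1) (hlip.mono fun y hy => (hball hy).1) hr hsub
          (norm_pos_iff.1 (hm.trans hgx))
    _ ≤ 2 * (n * 2 ^ n * ((K + 1) * r / m)) := by gcongr; linarith
    _ = 2 * (n * 2 ^ n * ((K + 1) / m)) * r := by ring

end
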